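/- At any step of the PPE construction, the set of outcomes remaining after all discardings equals the target set of the best Newcombian Class η*, and the next move equals the pure part of η*. In particular the two characterizations of the player's move (via the unique child containing all non-discarded outcomes, and via the pure part of the best class) coincide. -/

import Mathlib

open Classical

section PPE

variable {O C : Type*} [Fintype O] [DecidableEq O] [DecidableEq C]

/-- Target set of a Newcombian State (a list of children of the current node),
defined recursively from the remaining-outcome set `I`, the descendant map `D`
and the current player's payoff `pay`. -/
noncomputable def target (I : Finset O) (D : C → Finset O) (pay : O → ℤ) :
    List C → Finset O
  | [] => ∅
  | [n] => I ∩ D n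
  | n :: m :: p =>
      let Tp := target I D pay (m :: p)
      (I ∩ D n).filter (fun o => ¬ (Tp.Nonempty ∧ ∀ o' ∈ Tp, pay o < pay o'))

/-- A Newcombian State at the current node: a nonempty list of children with no
two consecutive elements equal. -/
def ValidState (F : Finset C) (η : List C) : Prop :=
  η ≠ [] ∧ (∀ n ∈ η, n ∈ F) ∧ η.Chain' (· ≠ ·)

/-- `o` is discarded by some Newcombian State at the current node. -/
def Discards (I : Finset O) (D : C → Finset O) (pay : O → ℤ) (F : Finset C)
    (o : O) : Prop :=
  ∃ n p, ValidState F (n :: p) ∧ o ∈ I ∧ o ∉ D n ∧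
    (target I D pay (n :: p)).Nonempty ∧
    ∀ o' ∈ target I D pay (n :: p), pay o < pay o'

/-- The set of outcomes remaining after the discarding process at the current node. -/
noncomputable def survivors (I : Finset O) (D : C → Finset O) (pay : O → ℤ)
    (F : Finset C) : Finset O :=
  I.filter (fun o => ¬ Discards I D pay F o)

/-- Worst payoff of a Newcombian State. -/
noncomputable def wp (I : Finset O) (D : C → Finset O) (pay : O → ℤ)
    (η : List C) : ℤ :=
  sInf (pay '' (target I D pay η : Set O))

end PPE

/-!
Write `T` for the target set of the best class `n₀ :: rest`. Its defining property says that
every outcome below a child `n ≠ n₀` pays less than all of `T`. So an outcome outside `D n₀` is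
discarded by `n₀ :: rest` itself. An outcome of `T` is never discarded: a discarding state
`n :: p` has `n ≠ n₀`, so its target set would lie strictly above that outcome and strictly
below `T`. Finally, a survivor below `n₀` lies outside the subtree of the head of `rest`, so if
it were dominated by the target set of `rest` it would be discarded by `rest`; hence it is in `T`.
-/

/-- The way a Newcombian State with target set `T` discards `o`: `pay o < wp T`. -/
def Dominated {O : Type*} (pay : O → ℤ) (T : Finset O) (o : O) : Prop :=
  T.Nonempty ∧ ∀ o' ∈ T, pay o < pay o'

theorem ValidState.mem {C : Type*} {F : Finset C} {η : List C} (h : ValidState F η)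
    {n : C} (hn : n ∈ η) : n ∈ F :=
  h.2.1 n hn

theorem ValidState.of_cons_cons {C : Type*} {F : Finset C} {n m : C} {p : List C}
    (h : ValidState F (n :: m :: p)) : n ≠ m ∧ ValidState F (m :: p) := by
  obtain ⟨-, hmem, hchain⟩ := h
  obtain ⟨hne, hchain'⟩ := List.isChain_cons_cons.mp hchain
  exact ⟨hne, List.cons_ne_nil _ _, fun x hx => hmem x (List.mem_cons_of_mem _ hx), hchain'⟩

section Target

variable {O C : Type*} [Fintype O] [DecidableEq O] (I : Finset O) (D : C → Finset O)
  (pay : O → ℤ)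

theorem target_cons_subset (n : C) (p : List C) : target I D pay (n :: p) ⊆ I ∩ D n := by
  cases p with
  | nil => simp [target]
  | cons m q => exact Finset.filter_subset _ _

variable {I D pay}

theorem mem_target_cons_cons {n m : C} {p : List C} {o : O} :
    o ∈ target I D pay (n :: m :: p) ↔
      o ∈ I ∩ D n ∧ ¬ Dominated pay (target I D pay (m :: p)) o := by
  rw [target, Finset.mem_filter, Dominated]

theorem dominated_of_target_cons_cons_eq_empty {n m : C} {p : List C}
    (h : target I D pay (n :: m :: p) = ∅) {o : O} (ho : o ∈ I ∩ D n) :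
    Dominated pay (target I D pay (m :: p)) o := by
  by_contra hdom
  simpa [h] using mem_target_cons_cons.mpr ⟨ho, hdom⟩

end Target

section BestClass

variable {O C : Type*} [Fintype O] [DecidableEq O]
  {I : Finset O} {D : C → Finset O} {pay : O → ℤ} {F : Finset C}
  {n₀ : C} {rest : List C}

theorem dominated_of_best (hbest : ∀ n ∈ F, n ≠ n₀ → target I D pay (n :: n₀ :: rest) = ∅)
    {n : C} (hn : n ∈ F) (hne : n ≠ n₀) {o : O} (ho : o ∈ I ∩ D n) :
    Dominated pay (target I D pay (n₀ :: rest)) o :=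
  dominated_of_target_cons_cons_eq_empty (hbest n hn hne) ho

theorem survivors_subset_descendants (hcov : ∀ o ∈ I, ∃ c ∈ F, o ∈ D c)
    (hv : ValidState F (n₀ :: rest))
    (hbest : ∀ n ∈ F, n ≠ n₀ → target I D pay (n :: n₀ :: rest) = ∅) :
    survivors I D pay F ⊆ D n₀ := by
  intro o ho
  obtain ⟨hoI, hkept⟩ := Finset.mem_filter.mp ho
  by_contra hoD
  obtain ⟨c, hcF, hoc⟩ := hcov o hoI
  have hc : c ≠ n₀ := by rintro rfl; exact hoD hoc
  exact hkept ⟨n₀, rest, hv, hoI, hoD,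
    dominated_of_best hbest hcF hc (Finset.mem_inter.mpr ⟨hoI, hoc⟩)⟩

theorem survivors_subset_target (hcov : ∀ o ∈ I, ∃ c ∈ F, o ∈ D c)
    (hdisj : ∀ c c' : C, c ≠ c' → Disjoint (D c) (D c'))
    (hv : ValidState F (n₀ :: rest))
    (hbest : ∀ n ∈ F, n ≠ n₀ → target I D pay (n :: n₀ :: rest) = ∅) :
    survivors I D pay F ⊆ target I D pay (n₀ :: rest) := by
  intro o ho
  have hoD := survivors_subset_descendants hcov hv hbest ho
  obtain ⟨hoI, hkept⟩ := Finset.mem_filter.mp ho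
  cases rest with
  | nil => simpa [target] using ⟨hoI, hoD⟩
  | cons m q =>
    obtain ⟨hne, hvm⟩ := hv.of_cons_cons
    refine mem_target_cons_cons.mpr ⟨Finset.mem_inter.mpr ⟨hoI, hoD⟩, fun hdom => ?_⟩
    exact hkept ⟨m, q, hvm, hoI, Finset.disjoint_left.mp (hdisj n₀ m hne) hoD, hdom⟩

theorem target_subset_survivors
    (hbest : ∀ n ∈ F, n ≠ n₀ → target I D pay (n :: n₀ :: rest) = ∅) :
    target I D pay (n₀ :: rest) ⊆ survivors I D pay F := by
  intro o hoT
  have hoID := Finset.mem_inter.mp (target_cons_subset I D pay n₀ rest hoT)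
  refine Finset.mem_filter.mpr ⟨hoID.1, ?_⟩
  rintro ⟨n, p, hv, -, hoD, ⟨o₁, ho₁⟩, hlt⟩
  have hn : n ≠ n₀ := by rintro rfl; exact hoD hoID.2
  have hdom := dominated_of_best hbest (hv.mem (List.mem_cons_self ..)) hn
    (target_cons_subset I D pay n p ho₁)
  exact lt_asymm (hlt o₁ ho₁) (hdom.2 o hoT)

end BestClass

theorem survivors_eq_target_of_best_class_general
    {O C : Type*} [Fintype O] [DecidableEq O]
    (I : Finset O) (D : C → Finset O) (pay : O → ℤ) (F : Finset C)
    (hcov : ∀ o ∈ I, ∃ c ∈ F, o ∈ D c)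
    (hdisj : ∀ c c' : C, c ≠ c' → Disjoint (D c) (D c'))
    (n₀ : C) (rest : List C) (hv : ValidState F (n₀ :: rest))
    (hbest : ∀ n ∈ F, n ≠ n₀ → target I D pay (n :: n₀ :: rest) = ∅) :
    survivors I D pay F = target I D pay (n₀ :: rest) ∧
    survivors I D pay F ⊆ D n₀ :=
  ⟨(survivors_subset_target hcov hdisj hv hbest).antisymm (target_subset_survivors hbest),
    survivors_subset_descendants hcov hv hbest⟩

/-- the set of outcomes remaining after all discardings equals the
target set of the best Newcombian Class η*, and the next move is the pure part of
η*: in particular all surviving outcomes lie in the subtree of `pure η*`, so the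
two characterizations of the player's move coincide. -/
theorem survivors_eq_target_of_best_class
    {O C : Type*} [Fintype O] [DecidableEq O] [DecidableEq C]
    (I : Finset O) (D : C → Finset O) (pay : O → ℤ) (F : Finset C)
    (hI : I.Nonempty)
    (hcov : ∀ o ∈ I, ∃ c ∈ F, o ∈ D c)
    (hdisj : ∀ c c' : C, c ≠ c' → Disjoint (D c) (D c'))
    (hpay : Function.Injective pay)
    (n₀ : C) (rest : List C) (hv : ValidState F (n₀ :: rest))
    (hbest : ∀ n ∈ F, n ≠ n₀ → target I D pay (n :: n₀ :: rest) = ∅) :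
    survivors I D pay F = target I D pay (n₀ :: rest) ∧
    survivors I D pay F ⊆ D n₀ :=
  survivors_eq_target_of_best_class_general I D pay F hcov hdisj n₀ rest hv hbest
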